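/- arXiv:1609.07652 — 12 statements merged into one kernel-verified Lean document; each statement's English description precedes it below -/
import Mathlib

section
/- Let h : ℝ → ℝ be differentiable and let a, k ∈ ℝ. Suppose u : ℝ → ℝ → ℝ is C² on ℝ × (0,∞) and satisfies u_t(t,r) = h'(u_r(t,r))·u_rr(t,r) − (1/r)·h(u_r(t,r)) + a + k·u(t,r) for all t ∈ ℝ and r > 0 (the case m = −1). Define T(t,r) = r⁻¹·exp(−k·t)·u(t,r) and X(t,r) = −exp(−k·t)·(r⁻¹·h(u_r(t,r)) + a·Real.log r). Then ∂T/∂t(t,r) + ∂X/∂r(t,r) = 0 for all t ∈ ℝ and r > 0. -/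
noncomputable section

/-- Partial derivative in the first (time) variable. -/
def partial_t (u : ℝ → ℝ → ℝ) (t r : ℝ) : ℝ := deriv (fun s => u s r) t

/-- Partial derivative in the second (space) variable. -/
def partial_r (u : ℝ → ℝ → ℝ) (t r : ℝ) : ℝ := deriv (fun s => u t s) r

/-- Second partial derivative in the second (space) variable. -/
def partial_rr (u : ℝ → ℝ → ℝ) (t r : ℝ) : ℝ := deriv (deriv (fun s => u t s)) r

/-- Mixed partial derivative: first in space, then in time. -/
def partial_tr (u : ℝ → ℝ → ℝ) (t r : ℝ) : ℝ := deriv (fun s => deriv (fun y => u s y) r) t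

/-- `u` is C² on ℝ × (0,∞): `u`, `u_t`, `u_r`, `u_rr` and the mixed partial `u_tr`
exist and are continuous there. -/
def IsC2On (u : ℝ → ℝ → ℝ) : Prop :=
  (∀ t r : ℝ, 0 < r → DifferentiableAt ℝ (fun s => u s r) t) ∧
  (∀ t r : ℝ, 0 < r → DifferentiableAt ℝ (fun s => u t s) r) ∧
  (∀ t r : ℝ, 0 < r → DifferentiableAt ℝ (deriv (fun s => u t s)) r) ∧
  (∀ t r : ℝ, 0 < r → DifferentiableAt ℝ (fun s => deriv (fun y => u s y) r) t) ∧
  ContinuousOn (fun q : ℝ × ℝ => u q.1 q.2) {q : ℝ × ℝ | 0 < q.2} ∧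
  ContinuousOn (fun q : ℝ × ℝ => partial_t u q.1 q.2) {q : ℝ × ℝ | 0 < q.2} ∧
  ContinuousOn (fun q : ℝ × ℝ => partial_r u q.1 q.2) {q : ℝ × ℝ | 0 < q.2} ∧
  ContinuousOn (fun q : ℝ × ℝ => partial_rr u q.1 q.2) {q : ℝ × ℝ | 0 < q.2} ∧
  ContinuousOn (fun q : ℝ × ℝ => partial_tr u q.1 q.2) {q : ℝ × ℝ | 0 < q.2}

/-! By the equation, `r⁻¹ (u_t - k u) = r⁻¹ h'(u_r) u_rr - r⁻² h(u_r) + a r⁻¹`, which is exactly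
`∂_r (r⁻¹ h(u_r) + a log r)`. Since `exp (-k t) (u_t - k u) = ∂_t (exp (-k t) u)`, multiplying
by `exp (-k t)` gives `∂_t T = -∂_r X`. -/

lemma HasDerivAt.exp_neg_mul_mul {f : ℝ → ℝ} {f' t : ℝ} (hf : HasDerivAt f f' t) (k : ℝ) :
    HasDerivAt (fun s => Real.exp (-k * s) * f s) (Real.exp (-k * t) * (f' - k * f t)) t := by
  have hexp : HasDerivAt (fun s => Real.exp (-k * s)) (Real.exp (-k * t) * -k) t := by
    simpa using ((hasDerivAt_id t).const_mul (-k)).exp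
  exact (hexp.fun_mul hf).congr_deriv (by ring)

lemma HasDerivAt.inv_mul_add_mul_log {g : ℝ → ℝ} {g' r : ℝ} (hg : HasDerivAt g g' r)
    (hr : r ≠ 0) (a : ℝ) :
    HasDerivAt (fun s => s⁻¹ * g s + a * Real.log s) (-(r ^ 2)⁻¹ * g r + r⁻¹ * g' + a * r⁻¹) r :=
  ((hasDerivAt_inv hr).fun_mul hg).fun_add ((Real.hasDerivAt_log hr).const_mul a)

/-- Conservation law with multiplier `r⁻¹ exp(-kt)` for the 1-dimensional nonlinear
diffusion-reaction equation with source `f(u) = a + k·u`, case `m = -1`. -/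
theorem conservation_law_linear_source_m_eq_neg_one (h : ℝ → ℝ) (hh : Differentiable ℝ h)
    (a k : ℝ)
    (u : ℝ → ℝ → ℝ) (hu : IsC2On u)
    (hpde : ∀ t r : ℝ, 0 < r →
      partial_t u t r = deriv h (partial_r u t r) * partial_rr u t r
        - (1 / r) * h (partial_r u t r) + a + k * u t r)
    (T X : ℝ → ℝ → ℝ)
    (hT : ∀ t r : ℝ, T t r = r⁻¹ * Real.exp (-k * t) * u t r)
    (hX : ∀ t r : ℝ, X t r
      = -(Real.exp (-k * t) * (r⁻¹ * h (partial_r u t r) + a * Real.log r))) :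
    ∀ t r : ℝ, 0 < r → partial_t T t r + partial_r X t r = 0 := by
  obtain ⟨hu_t, -, hu_rr, -⟩ := hu
  intro t r hr
  have hT_t : partial_t T t r = r⁻¹ * (Real.exp (-k * t) * (partial_t u t r - k * u t r)) := by
    simp only [partial_t, hT, mul_assoc]
    exact (((hu_t t r hr).hasDerivAt.exp_neg_mul_mul k).const_mul r⁻¹).deriv
  have hX_r : partial_r X t r = -(Real.exp (-k * t) * (-(r ^ 2)⁻¹ * h (partial_r u t r)
      + r⁻¹ * (deriv h (partial_r u t r) * partial_rr u t r) + a * r⁻¹)) := by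
    have hflux := ((hh _).hasDerivAt.comp r (hu_rr t r hr).hasDerivAt).inv_mul_add_mul_log
      hr.ne' a
    simp only [partial_r, hX]
    exact (hflux.const_mul _).neg.deriv
  rw [hT_t, hX_r, hpde t r hr]
  field_simp
  ring
end
end

section
/- Let κ, m ∈ ℝ and let f : ℝ → ℝ be continuous. Let φ : ℝ → ℝ → ℝ be C² on ℝ² and satisfy φ_t(t,z) + κ·φ_zz(t,z) + f(z)·φ_z(t,z) = 0 for all (t,z) ∈ ℝ². Suppose u : ℝ → ℝ → ℝ is C² on ℝ × (0,∞), u_r(t,r) ≠ 0 for all t ∈ ℝ and r > 0, and u satisfies u_t(t,r) = κ·(u_rr(t,r) − (m/r)·u_r(t,r))/u_r(t,r)² + f(u(t,r)) for all t ∈ ℝ and r > 0. Define T(t,r) = r^m·φ(t, u(t,r)) and X(t,r) = κ·r^m·φ_z(t, u(t,r))/u_r(t,r). Then ∂T/∂t(t,r) + ∂X/∂r(t,r) = 0 for all t ∈ ℝ and r > 0. -/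
noncomputable section

/-!
Differentiate `T` in `t` and `X` in `r` by the chain rule, then eliminate `u_t` with the
equation for `u` and `φ_t` with the backward equation for `φ`. Everything cancels: the term
`m r^(m-1) φ_z / u_r` coming from the weight `r^m` against the drift `(m/r) u_r` of the equation,
the two `u_rr` terms against each other, and `κ φ_zz + f φ_z` against `φ_t`.
-/

open Function

theorem partial_t_eq_fderiv {φ : ℝ → ℝ → ℝ} {a z : ℝ}
    (hφ : DifferentiableAt ℝ (uncurry φ) (a, z)) :
    partial_t φ a z = fderiv ℝ (uncurry φ) (a, z) (1, 0) :=
  (hφ.hasFDerivAt.comp_hasDerivAt (l := uncurry φ) a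
    ((hasDerivAt_id a).prodMk (hasDerivAt_const a z))).deriv

theorem partial_r_eq_fderiv {φ : ℝ → ℝ → ℝ} {a z : ℝ}
    (hφ : DifferentiableAt ℝ (uncurry φ) (a, z)) :
    partial_r φ a z = fderiv ℝ (uncurry φ) (a, z) (0, 1) :=
  (hφ.hasFDerivAt.comp_hasDerivAt (l := uncurry φ) z
    ((hasDerivAt_const z a).prodMk (hasDerivAt_id z))).deriv

theorem partial_rr_eq_partial_r_partial_r (φ : ℝ → ℝ → ℝ) (a z : ℝ) :
    partial_rr φ a z = partial_r (partial_r φ) a z :=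
  rfl

theorem ContDiff.uncurry_partial_r {φ : ℝ → ℝ → ℝ} {n : WithTop ℕ∞}
    (hφ : ContDiff ℝ (n + 1) (uncurry φ)) : ContDiff ℝ n (uncurry (partial_r φ)) := by
  have hdiff : Differentiable ℝ (uncurry φ) := hφ.differentiable (by simp)
  have heq : uncurry (partial_r φ) = fun x => fderiv ℝ (uncurry φ) x (0, 1) := by
    funext ⟨a, z⟩
    exact partial_r_eq_fderiv (hdiff (a, z))
  rw [heq]
  exact (ContinuousLinearMap.apply ℝ ℝ ((0 : ℝ), (1 : ℝ))).contDiff.comp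
    (hφ.fderiv_right le_rfl)

theorem HasDerivAt.comp_partials {φ : ℝ → ℝ → ℝ} {p q : ℝ → ℝ} {p' q' s : ℝ}
    (hφ : DifferentiableAt ℝ (uncurry φ) (p s, q s))
    (hp : HasDerivAt p p' s) (hq : HasDerivAt q q' s) :
    HasDerivAt (fun x => φ (p x) (q x))
      (p' * partial_t φ (p s) (q s) + q' * partial_r φ (p s) (q s)) s := by
  have hchain := hφ.hasFDerivAt.comp_hasDerivAt (l := uncurry φ) s (hp.prodMk hq)
  have hsplit : ((p', q') : ℝ × ℝ) = p' • ((1 : ℝ), (0 : ℝ)) + q' • ((0 : ℝ), (1 : ℝ)) := by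
    simp
  rw [hsplit, map_add, map_smul, map_smul, smul_eq_mul, smul_eq_mul,
    ← partial_t_eq_fderiv hφ, ← partial_r_eq_fderiv hφ] at hchain
  exact hchain

theorem partial_t_rpow_mul_comp {φ u : ℝ → ℝ → ℝ} {t r : ℝ} (m : ℝ)
    (hφ : DifferentiableAt ℝ (uncurry φ) (t, u t r))
    (hu_t : DifferentiableAt ℝ (fun s => u s r) t) :
    partial_t (fun t r => r ^ m * φ t (u t r)) t r
      = r ^ m * (partial_t φ t (u t r) + partial_t u t r * partial_r φ t (u t r)) := by
  have hcomp := HasDerivAt.comp_partials hφ (hasDerivAt_id' t) hu_t.hasDerivAt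
  rw [one_mul] at hcomp
  exact (hcomp.const_mul (r ^ m)).deriv

theorem partial_r_rpow_mul_partial_r_comp_div {φ u : ℝ → ℝ → ℝ} {t r : ℝ} (κ m : ℝ)
    (hr : r ≠ 0) (hφ : DifferentiableAt ℝ (uncurry (partial_r φ)) (t, u t r))
    (hu_r : DifferentiableAt ℝ (fun s => u t s) r)
    (hu_rr : DifferentiableAt ℝ (fun s => partial_r u t s) r) (hur : partial_r u t r ≠ 0) :
    partial_r (fun t r => κ * r ^ m * partial_r φ t (u t r) / partial_r u t r) t r
      = ((κ * (m * r ^ (m - 1)) * partial_r φ t (u t r)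
          + κ * r ^ m * (partial_r u t r * partial_rr φ t (u t r))) * partial_r u t r
        - κ * r ^ m * partial_r φ t (u t r) * partial_rr u t r) / partial_r u t r ^ 2 := by
  have hcomp := HasDerivAt.comp_partials hφ (hasDerivAt_const r t) hu_r.hasDerivAt
  rw [zero_mul, zero_add, ← partial_rr_eq_partial_r_partial_r] at hcomp
  exact ((((Real.hasDerivAt_rpow_const (Or.inl hr)).const_mul κ).mul hcomp).div
    hu_rr.hasDerivAt hur).deriv

theorem conservation_law_phi_family_general (κ m : ℝ) (f : ℝ → ℝ)
    (φ : ℝ → ℝ → ℝ) (hφ : ContDiff ℝ 2 (Function.uncurry φ))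
    (hlin : ∀ t z : ℝ, partial_t φ t z + κ * partial_rr φ t z + f z * partial_r φ t z = 0)
    (u : ℝ → ℝ → ℝ) (hu : IsC2On u)
    (hur : ∀ t r : ℝ, 0 < r → partial_r u t r ≠ 0)
    (hpde : ∀ t r : ℝ, 0 < r →
      partial_t u t r
        = κ * (partial_rr u t r - (m / r) * partial_r u t r) / (partial_r u t r) ^ 2
          + f (u t r))
    (T X : ℝ → ℝ → ℝ)
    (hT : ∀ t r : ℝ, T t r = r ^ m * φ t (u t r))
    (hX : ∀ t r : ℝ, X t r = κ * r ^ m * partial_r φ t (u t r) / partial_r u t r) :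
    ∀ t r : ℝ, 0 < r → partial_t T t r + partial_r X t r = 0 := by
  obtain ⟨hu_t, hu_r, hu_rr, -⟩ := hu
  obtain rfl : T = fun t r => r ^ m * φ t (u t r) := funext₂ hT
  obtain rfl : X = fun t r => κ * r ^ m * partial_r φ t (u t r) / partial_r u t r := funext₂ hX
  intro t r hr
  have hφz_diff : Differentiable ℝ (uncurry (partial_r φ)) :=
    (ContDiff.uncurry_partial_r (n := 1) hφ).differentiable one_ne_zero
  have hφ_t : partial_t φ t (u t r)
      = -(κ * partial_rr φ t (u t r)) - f (u t r) * partial_r φ t (u t r) := by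
    linarith [hlin t (u t r)]
  have hr_pow : r ^ (m - 1) = r ^ m / r := by rw [Real.rpow_sub hr, Real.rpow_one]
  have hur₀ := hur t r hr
  rw [partial_t_rpow_mul_comp m (hφ.differentiable two_ne_zero _) (hu_t t r hr),
    partial_r_rpow_mul_partial_r_comp_div κ m hr.ne' (hφz_diff _) (hu_r t r hr) (hu_rr t r hr) hur₀,
    hpde t r hr, hr_pow, hφ_t]
  field_simp
  ring

/-- Infinite family of conservation laws for the 1-dimensional nonlinear
diffusion-reaction equation with diffusivity `h(v) = -κ/v`. -/
theorem conservation_law_phi_family (κ m : ℝ) (f : ℝ → ℝ) (hf : Continuous f)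
    (φ : ℝ → ℝ → ℝ) (hφ : ContDiff ℝ 2 (Function.uncurry φ))
    (hlin : ∀ t z : ℝ, partial_t φ t z + κ * partial_rr φ t z + f z * partial_r φ t z = 0)
    (u : ℝ → ℝ → ℝ) (hu : IsC2On u)
    (hur : ∀ t r : ℝ, 0 < r → partial_r u t r ≠ 0)
    (hpde : ∀ t r : ℝ, 0 < r →
      partial_t u t r
        = κ * (partial_rr u t r - (m / r) * partial_r u t r) / (partial_r u t r) ^ 2
          + f (u t r))
    (T X : ℝ → ℝ → ℝ)
    (hT : ∀ t r : ℝ, T t r = r ^ m * φ t (u t r))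
    (hX : ∀ t r : ℝ, X t r = κ * r ^ m * partial_r φ t (u t r) / partial_r u t r) :
    ∀ t r : ℝ, 0 < r → partial_t T t r + partial_r X t r = 0 :=
  conservation_law_phi_family_general κ m f φ hφ hlin u hu hur hpde T X hT hX
end
end

section
/- Let κ, m, α, a, k, p ∈ ℝ with k ≠ 0 and p ≠ 0. Suppose u : ℝ → ℝ → ℝ is C² on ℝ × (0,∞), α + u_r(t,r) ≠ 0 for all t ∈ ℝ and r > 0, and u satisfies u_t(t,r) = κ·u_rr(t,r)/(α + u_r(t,r))² − (m/r)·κ/(α + u_r(t,r)) + a + k·exp(p·u(t,r)) for all t ∈ ℝ and r > 0. Let G : ℝ → ℝ be differentiable on (0,∞) with G'(r) = −k·p·r^m·exp(−p·α·r) for all r > 0. Define T(t,r) = r^m·exp(−p·((p·κ − a)·t + α·r + u(t,r))) and X(t,r) = −exp(p·(a − p·κ)·t)·(p·κ·r^m·exp(−p·(α·r + u(t,r)))/(α + u_r(t,r)) + G(r)). Then ∂T/∂t(t,r) + ∂X/∂r(t,r) = 0 for all t ∈ ℝ and r > 0. -/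
/-!
Write `E = exp (-p (α r + u))` and `D = α + u_r`. Differentiating, both `∂T/∂t` and `∂X/∂r` are
`-p e^{p(a - pκ)t} r^m E` times an expression in `u_t`, `u_r`, `u_rr`, `u`, using
`exp (-p α r) = E e^{p u}` for the term coming from `G`. Their sum is that multiplier times the
residual `u_t - (κ u_rr / D² - (m/r) κ / D + a + k e^{p u})` of the equation, hence zero.
-/

noncomputable section

open Real

theorem hasDerivAt_rpow_mul_exp_neg_mul (κ m α a p r : ℝ) {t w' : ℝ} {w : ℝ → ℝ}
    (hw : HasDerivAt w w' t) :
    HasDerivAt (fun s => r ^ m * exp (-p * ((p * κ - a) * s + α * r + w s)))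
      (-p * exp (p * (a - p * κ) * t) * r ^ m * exp (-p * (α * r + w t)) * (p * κ - a + w')) t := by
  have hexp : exp (-p * ((p * κ - a) * t + α * r + w t))
      = exp (p * (a - p * κ) * t) * exp (-p * (α * r + w t)) := by
    rw [← exp_add]
    ring_nf
  have hlin : HasDerivAt (fun s => -p * ((p * κ - a) * s + α * r + w s))
      (-p * (p * κ - a + w')) t := by
    simpa using ((((hasDerivAt_id t).const_mul (p * κ - a)).add_const (α * r)).add hw).const_mul
      (-p)
  refine (hlin.exp.const_mul (r ^ m)).congr_deriv ?_
  rw [hexp]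
  ring

theorem hasDerivAt_flux (κ : ℝ) {m α k p r w'' : ℝ} {w v G : ℝ → ℝ} (hr : 0 < r)
    (hw : HasDerivAt w (v r) r) (hv : HasDerivAt v w'' r) (hD : α + v r ≠ 0)
    (hG : HasDerivAt G (-k * p * r ^ m * exp (-p * α * r)) r) :
    HasDerivAt (fun s => p * κ * s ^ m * exp (-p * (α * s + w s)) / (α + v s) + G s)
      (p * r ^ m * exp (-p * (α * r + w r))
        * (κ * (m / r / (α + v r) - p - w'' / (α + v r) ^ 2) - k * exp (p * w r))) r := by
  have hpow : HasDerivAt (fun s : ℝ => s ^ m) (m * r ^ (m - 1)) r := by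
    simpa using hasDerivAt_rpow_const (p := m) (Or.inl hr.ne')
  have hlin : HasDerivAt (fun s => -p * (α * s + w s)) (-p * (α * 1 + v r)) r :=
    (((hasDerivAt_id' r).const_mul α).add hw).const_mul (-p)
  have h : HasDerivAt (fun s => p * κ * s ^ m * exp (-p * (α * s + w s)) / (α + v s) + G s) _ r :=
    (((hpow.const_mul (p * κ)).fun_mul hlin.exp).div (hv.const_add α) hD).add hG
  refine h.congr_deriv ?_
  have hG_exp : exp (-p * α * r) = exp (-p * (α * r + w r)) * exp (p * w r) := by
    rw [← exp_add]
    ring_nf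
  have hrpow : r ^ (m - 1) = r ^ m / r := by
    rw [eq_div_iff hr.ne', ← rpow_add_one hr.ne', sub_add_cancel]
  rw [hG_exp, hrpow]
  field_simp
  ring

theorem conservation_law_exponential_source_general (κ m α a k p : ℝ)
    (u : ℝ → ℝ → ℝ) (hu : IsC2On u)
    (hur : ∀ t r : ℝ, 0 < r → α + partial_r u t r ≠ 0)
    (hpde : ∀ t r : ℝ, 0 < r →
      partial_t u t r
        = κ * partial_rr u t r / (α + partial_r u t r) ^ 2
          - (m / r) * κ / (α + partial_r u t r) + a + k * Real.exp (p * u t r))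
    (G : ℝ → ℝ)
    (hG : ∀ r : ℝ, 0 < r → HasDerivAt G (-k * p * r ^ m * Real.exp (-p * α * r)) r)
    (T X : ℝ → ℝ → ℝ)
    (hT : ∀ t r : ℝ, T t r
      = r ^ m * Real.exp (-p * ((p * κ - a) * t + α * r + u t r)))
    (hX : ∀ t r : ℝ, X t r
      = -(Real.exp (p * (a - p * κ) * t)
          * (p * κ * r ^ m * Real.exp (-p * (α * r + u t r)) / (α + partial_r u t r)
            + G r))) :
    ∀ t r : ℝ, 0 < r → partial_t T t r + partial_r X t r = 0 := by
  obtain ⟨hu_t, hu_r, hu_rr, -⟩ := hu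
  intro t r hr
  have hut : HasDerivAt (fun s => u s r) (partial_t u t r) t := (hu_t t r hr).hasDerivAt
  have hur' : HasDerivAt (u t) (partial_r u t r) r := (hu_r t r hr).hasDerivAt
  have hurr : HasDerivAt (partial_r u t) (partial_rr u t r) r := (hu_rr t r hr).hasDerivAt
  have hTt := (hasDerivAt_rpow_mul_exp_neg_mul κ m α a p r hut).deriv
  have hXr := ((hasDerivAt_flux κ hr hur' hurr (hur t r hr) (hG r hr)).const_mul
    (Real.exp (p * (a - p * κ) * t))).fun_neg.deriv
  rw [partial_t, partial_r]
  simp only [hT, hX]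
  rw [hTt, hXr, hpde t r hr]
  ring

/-- Conservation law for the 1-dimensional nonlinear diffusion-reaction equation with
diffusivity `h(v) = -κ/(α+v)` and source `f(u) = a + k·exp(p·u)`. -/
theorem conservation_law_exponential_source (κ m α a k p : ℝ) (hk : k ≠ 0) (hp : p ≠ 0)
    (u : ℝ → ℝ → ℝ) (hu : IsC2On u)
    (hur : ∀ t r : ℝ, 0 < r → α + partial_r u t r ≠ 0)
    (hpde : ∀ t r : ℝ, 0 < r →
      partial_t u t r
        = κ * partial_rr u t r / (α + partial_r u t r) ^ 2
          - (m / r) * κ / (α + partial_r u t r) + a + k * Real.exp (p * u t r))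
    (G : ℝ → ℝ)
    (hG : ∀ r : ℝ, 0 < r → HasDerivAt G (-k * p * r ^ m * Real.exp (-p * α * r)) r)
    (T X : ℝ → ℝ → ℝ)
    (hT : ∀ t r : ℝ, T t r
      = r ^ m * Real.exp (-p * ((p * κ - a) * t + α * r + u t r)))
    (hX : ∀ t r : ℝ, X t r
      = -(Real.exp (p * (a - p * κ) * t)
          * (p * κ * r ^ m * Real.exp (-p * (α * r + u t r)) / (α + partial_r u t r)
            + G r))) :
    ∀ t r : ℝ, 0 < r → partial_t T t r + partial_r X t r = 0 :=
  conservation_law_exponential_source_general κ m α a k p u hu hur hpde G hG T X hT hX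
end
end

section
/- Let κ, α, a, m ∈ ℝ with m ≠ −1. Suppose u : ℝ → ℝ → ℝ is C² on ℝ × (0,∞), α + u_r(t,r) ≠ 0 for all t ∈ ℝ and r > 0, and u satisfies u_t(t,r) = κ·(u_rr(t,r) − (m/r)·(α + u_r(t,r)))/(α + u_r(t,r))² + a for all t ∈ ℝ and r > 0. Suppose w : ℝ → ℝ → ℝ is C² on ℝ² and satisfies the hodograph relation w(t, α·r + u(t,r)) = r^(m+1)/(m+1) for all t ∈ ℝ and r > 0. Then for all t ∈ ℝ and r > 0, setting z = α·r + u(t,r), one has w_t(t,z) = κ·w_zz(t,z) − a·w_z(t,z); that is, w satisfies a linear diffusion equation at every point in the image of the map (t,r) ↦ (t, α·r + u(t,r)). -/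
noncomputable section

/-!
Differentiating the hodograph relation `w (t, α r + u) = r ^ (m + 1) / (m + 1)` once and twice
in `r` gives `w_z (α + u_r) = r ^ m` and `w_zz (α + u_r) ^ 2 + w_z u_rr = m r ^ (m - 1)`, and
differentiating it in `t` gives `w_t + u_t w_z = 0`. Substituting the equation for `u_t` and
eliminating `u_rr` with the second identity leaves `w_t = κ w_zz - a w_z`.
-/

open Filter Function Topology

theorem hasDerivAt_rpow_add_one_div {x : ℝ} (hx : 0 < x) {m : ℝ} (hm : m ≠ -1) :
    HasDerivAt (fun y : ℝ => y ^ (m + 1) / (m + 1)) (x ^ m) x := by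
  have hm1 : m + 1 ≠ 0 := fun h => hm (by linarith)
  have h := (Real.hasDerivAt_rpow_const (p := m + 1) (Or.inl hx.ne')).div_const (m + 1)
  rwa [add_sub_cancel_right, mul_div_cancel_left₀ _ hm1] at h

theorem HasDerivAt.eq_of_eventuallyEq {f g : ℝ → ℝ} {f' g' x : ℝ} (hf : HasDerivAt f f' x)
    (hg : HasDerivAt g g' x) (hfg : f =ᶠ[𝓝 x] g) : f' = g' :=
  hf.unique (hg.congr_of_eventuallyEq hfg)

theorem hasDerivAt_comp_graph {w : ℝ → ℝ → ℝ} {Z : ℝ → ℝ} {Z' t : ℝ}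
    (hw : DifferentiableAt ℝ (uncurry w) (t, Z t)) (hZ : HasDerivAt Z Z' t) :
    HasDerivAt (fun s => w s (Z s)) (partial_t w t (Z t) + Z' * partial_r w t (Z t)) t := by
  set L := fderiv ℝ (uncurry w) (t, Z t)
  have hwt : HasDerivAt (fun s => w s (Z t)) (L (1, 0)) t :=
    (hw.hasFDerivAt.comp_hasDerivAt t ((hasDerivAt_id t).prodMk (hasDerivAt_const t (Z t))) :)
  have hwz : HasDerivAt (fun y => w t y) (L (0, 1)) (Z t) :=
    (hw.hasFDerivAt.comp_hasDerivAt (Z t)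
      ((hasDerivAt_const (Z t) t).prodMk (hasDerivAt_id (Z t))) :)
  have hsplit : L (1, Z') = L (1, 0) + Z' * L (0, 1) := by
    rw [← smul_eq_mul, ← map_smul, ← map_add]
    simp
  rw [partial_t, partial_r, hwt.deriv, hwz.deriv, ← hsplit]
  exact (hw.hasFDerivAt.comp_hasDerivAt t ((hasDerivAt_id t).prodMk hZ) :)

section Hodograph

variable {u w : ℝ → ℝ → ℝ} {α m t : ℝ}

theorem hasDerivAt_hodograph_map {r : ℝ} (hu : DifferentiableAt ℝ (fun s => u t s) r) :
    HasDerivAt (fun s => α * s + u t s) (α + partial_r u t r) r :=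
  ((hasDerivAt_id r).const_mul α).add hu.hasDerivAt |>.congr_deriv (by simp [partial_r])

theorem partial_r_mul_eq_rpow_of_hodograph (hm : m ≠ -1)
    (hu : ∀ r, 0 < r → DifferentiableAt ℝ (fun s => u t s) r)
    (hw : Differentiable ℝ (fun z => w t z))
    (hhod : ∀ r, 0 < r → w t (α * r + u t r) = r ^ (m + 1) / (m + 1)) :
    ∀ r, 0 < r → partial_r w t (α * r + u t r) * (α + partial_r u t r) = r ^ m := fun r hr =>
  ((hw _).hasDerivAt.comp r (hasDerivAt_hodograph_map (hu r hr))).eq_of_eventuallyEq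
    (hasDerivAt_rpow_add_one_div hr hm) (eventually_gt_nhds hr |>.mono hhod)

theorem partial_rr_mul_sq_add_eq_of_hodograph
    (hu : ∀ r, 0 < r → DifferentiableAt ℝ (fun s => u t s) r)
    (hw : Differentiable ℝ (deriv fun z => w t z))
    (hpr : ∀ r, 0 < r → partial_r w t (α * r + u t r) * (α + partial_r u t r) = r ^ m)
    {r : ℝ} (hr : 0 < r) (hur : DifferentiableAt ℝ (deriv fun s => u t s) r) :
    partial_rr w t (α * r + u t r) * (α + partial_r u t r) ^ 2
      + partial_r w t (α * r + u t r) * partial_rr u t r = m * r ^ (m - 1) := by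
  have hprod := ((hw _).hasDerivAt.comp r (hasDerivAt_hodograph_map (α := α) (hu r hr))).mul
    (hur.hasDerivAt.const_add α)
  have := hprod.eq_of_eventuallyEq (Real.hasDerivAt_rpow_const (p := m) (Or.inl hr.ne'))
    (eventually_gt_nhds hr |>.mono hpr)
  rw [← this]
  simp only [partial_rr, partial_r, comp_apply]
  ring

theorem partial_t_add_mul_partial_r_eq_zero_of_hodograph {r : ℝ}
    (hw : DifferentiableAt ℝ (uncurry w) (t, α * r + u t r))
    (hu : DifferentiableAt ℝ (fun s => u s r) t)
    (hhod : ∀ t, w t (α * r + u t r) = r ^ (m + 1) / (m + 1)) :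
    partial_t w t (α * r + u t r) + partial_t u t r * partial_r w t (α * r + u t r) = 0 :=
  (hasDerivAt_comp_graph (Z := fun s => α * r + u s r) hw
    (hu.hasDerivAt.const_add (α * r))).eq_of_eventuallyEq (hasDerivAt_const t _)
    (Eventually.of_forall hhod)

end Hodograph

theorem hodograph_alpha_general (κ α a m : ℝ) (hm : m ≠ -1)
    (u : ℝ → ℝ → ℝ) (hu : IsC2On u)
    (hpde : ∀ t r : ℝ, 0 < r →
      partial_t u t r
        = κ * (partial_rr u t r - (m / r) * (α + partial_r u t r))
            / (α + partial_r u t r) ^ 2 + a)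
    (w : ℝ → ℝ → ℝ) (hw : ContDiff ℝ 2 (Function.uncurry w))
    (hhod : ∀ t r : ℝ, 0 < r → w t (α * r + u t r) = r ^ (m + 1) / (m + 1)) :
    ∀ t r : ℝ, 0 < r →
      partial_t w t (α * r + u t r)
        = κ * partial_rr w t (α * r + u t r) - a * partial_r w t (α * r + u t r) := by
  obtain ⟨hut, hur, hurr, -⟩ := hu
  intro t r hr
  have hslice : ContDiff ℝ 2 (fun z => w t z) := hw.comp (contDiff_const.prodMk contDiff_id)
  have hpr := partial_r_mul_eq_rpow_of_hodograph hm (hur t)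
    (hslice.differentiable two_ne_zero) (hhod t)
  have hprr := partial_rr_mul_sq_add_eq_of_hodograph (hur t) hslice.differentiable_deriv_two
    hpr hr (hurr t r hr)
  have hpt := partial_t_add_mul_partial_r_eq_zero_of_hodograph (hw.differentiable two_ne_zero _)
    (hut t r hr) (hhod · r hr)
  have hA : α + partial_r u t r ≠ 0 := by
    intro h
    have := hpr r hr
    rw [h, mul_zero] at this
    exact (Real.rpow_pos_of_pos hr m).ne this
  rw [hpde t r hr] at hpt
  rw [Real.rpow_sub_one hr.ne', ← hpr r hr] at hprr
  field_simp at hpt hprr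
  refine mul_left_cancel₀ (mul_ne_zero hr.ne' (pow_ne_zero 2 hA)) ?_
  linear_combination hpt - κ * hprr

/-- Hodograph transformation: the equation with diffusivity `h(v) = -κ/(α+v)` and
constant source `a` is mapped to a linear diffusion equation. -/
theorem hodograph_alpha (κ α a m : ℝ) (hm : m ≠ -1)
    (u : ℝ → ℝ → ℝ) (hu : IsC2On u)
    (hur : ∀ t r : ℝ, 0 < r → α + partial_r u t r ≠ 0)
    (hpde : ∀ t r : ℝ, 0 < r →
      partial_t u t r
        = κ * (partial_rr u t r - (m / r) * (α + partial_r u t r))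
            / (α + partial_r u t r) ^ 2 + a)
    (w : ℝ → ℝ → ℝ) (hw : ContDiff ℝ 2 (Function.uncurry w))
    (hhod : ∀ t r : ℝ, 0 < r → w t (α * r + u t r) = r ^ (m + 1) / (m + 1)) :
    ∀ t r : ℝ, 0 < r →
      partial_t w t (α * r + u t r)
        = κ * partial_rr w t (α * r + u t r) - a * partial_r w t (α * r + u t r) :=
  hodograph_alpha_general κ α a m hm u hu hpde w hw hhod
end
end

section
/- Let n be a natural number with n ≥ 1, let κ ∈ ℝ, and let f : ℝ → ℝ. Suppose u : ℝ → ℝ → ℝ is C² on ℝ × (0,∞), u_r(t,r) ≠ 0 for all t ∈ ℝ and r > 0, and u satisfies the radial equation u_t(t,r) = κ·(u_rr(t,r) − ((n−1)/r)·u_r(t,r))/u_r(t,r)² + f(u(t,r)) for all t ∈ ℝ and r > 0 (the radial nonlinear diffusion–reaction equation in n dimensions with gradient diffusivity g(|u_r|) = −κ/u_r²). Suppose w : ℝ → ℝ → ℝ is C² on ℝ² and satisfies w(t, u(t,r)) = r^n/n for all t ∈ ℝ and r > 0. Then for all t ∈ ℝ and r > 0, setting z = u(t,r), one has w_t(t,z)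 = κ·w_zz(t,z) − f(z)·w_z(t,z). -/
/-!
Differentiating the hodograph relation `w(t, u(t,r)) = rⁿ/n` in `t` gives `w_t = -w_z u_t`, and
in `r` gives `w_z u_r = rⁿ⁻¹`. By Euler's relation for this homogeneous function of degree `n - 1`,
one more `r`-derivative gives `r (w_zz u_r² + w_z u_rr) = (n - 1) w_z u_r`, which is exactly what
turns `-w_z u_t`, with `u_t` taken from the radial equation, into `κ w_zz - f(z) w_z`.
-/

noncomputable section

open Filter Topology Function

theorem HasDerivAt.mul_eq_natCast_mul_of_eventuallyEq_pow {h : ℝ → ℝ} {h' r : ℝ} {m : ℕ}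
    (hh : HasDerivAt h h' r) (heq : h =ᶠ[𝓝 r] fun s => s ^ m) : r * h' = m * h r := by
  rw [(hh.congr_of_eventuallyEq heq.symm).unique (hasDerivAt_pow m r), heq.eq_of_nhds]
  cases m with
  | zero => simp
  | succ k => simp only [Nat.add_sub_cancel, pow_succ]; ring

theorem HasDerivAt.comp_uncurry {w : ℝ → ℝ → ℝ} {g : ℝ → ℝ} {g' t : ℝ}
    (hw : DifferentiableAt ℝ (uncurry w) (t, g t)) (hg : HasDerivAt g g' t) :
    HasDerivAt (fun s => w s (g s)) (partial_t w t (g t) + partial_r w t (g t) * g') t := by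
  set L := fderiv ℝ (uncurry w) (t, g t)
  have hL : HasFDerivAt (uncurry w) L (t, g t) := hw.hasFDerivAt
  have ht : HasDerivAt (fun s => w s (g t)) (L (1, 0)) t :=
    hL.comp_hasDerivAt (l := uncurry w) t ((hasDerivAt_id t).prodMk (hasDerivAt_const t (g t)))
  have hz : HasDerivAt (w t) (L (0, 1)) (g t) :=
    hL.comp_hasDerivAt (l := uncurry w) (g t)
      ((hasDerivAt_const (g t) t).prodMk (hasDerivAt_id (g t)))
  have hcomp : HasDerivAt (fun s => w s (g s)) (L (1, g')) t :=
    hL.comp_hasDerivAt (l := uncurry w) t ((hasDerivAt_id t).prodMk hg)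
  have hsplit : ((1 : ℝ), g') = (1, 0) + g' • ((0 : ℝ), (1 : ℝ)) := by simp
  rwa [hsplit, map_add, map_smul, smul_eq_mul, ← ht.deriv, ← hz.deriv, mul_comm] at hcomp

theorem differentiable_partial_r_of_contDiff_two {w : ℝ → ℝ → ℝ}
    (hw : ContDiff ℝ 2 (uncurry w)) (t : ℝ) : Differentiable ℝ (partial_r w t) := by
  have hwt : ContDiff ℝ (1 + 1) (w t) := hw.comp (contDiff_const.prodMk contDiff_id)
  exact hwt.deriv'.differentiable one_ne_zero

section Hodograph

variable {u w : ℝ → ℝ → ℝ} {t r : ℝ}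

theorem hodograph_dt {c : ℝ} (hw : DifferentiableAt ℝ (uncurry w) (t, u t r))
    (hu : DifferentiableAt ℝ (fun s => u s r) t) (hhod : ∀ s, w s (u s r) = c) :
    partial_t w t (u t r) + partial_r w t (u t r) * partial_t u t r = 0 := by
  have hconst : HasDerivAt (fun s => w s (u s r)) 0 t := by
    simpa only [hhod] using hasDerivAt_const t c
  exact (hu.hasDerivAt.comp_uncurry hw).unique hconst

theorem hodograph_dr {n : ℕ} (hn : n ≠ 0) (hw : DifferentiableAt ℝ (w t) (u t r))
    (hu : DifferentiableAt ℝ (u t) r) (hhod : (fun s => w t (u t s)) =ᶠ[𝓝 r] fun s => s ^ n / n) :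
    partial_r w t (u t r) * partial_r u t r = r ^ (n - 1) := by
  have hpow : HasDerivAt (fun s : ℝ => s ^ n / n) (n * r ^ (n - 1) / n) r :=
    (hasDerivAt_pow n r).div_const _
  have hcomp := hw.hasDerivAt.comp r hu.hasDerivAt
  change deriv (w t) (u t r) * deriv (u t) r = _
  rw [(hcomp.congr_of_eventuallyEq hhod.symm).unique hpow]
  field_simp

theorem hodograph_drr {n : ℕ} (hn : 1 ≤ n) (hwz : DifferentiableAt ℝ (partial_r w t) (u t r))
    (hur : DifferentiableAt ℝ (partial_r u t) r) (hu : DifferentiableAt ℝ (u t) r)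
    (hdr : ∀ᶠ s in 𝓝 r, partial_r w t (u t s) * partial_r u t s = s ^ (n - 1)) :
    r * (partial_rr w t (u t r) * partial_r u t r ^ 2 + partial_r w t (u t r) * partial_rr u t r)
      = (n - 1) * (partial_r w t (u t r) * partial_r u t r) := by
  have hderiv := (hwz.hasDerivAt.comp r hu.hasDerivAt).mul hur.hasDerivAt
  have euler := hderiv.mul_eq_natCast_mul_of_eventuallyEq_pow hdr
  rw [Nat.cast_pred hn] at euler
  change r * (partial_rr w t (u t r) * partial_r u t r * partial_r u t r
    + partial_r w t (u t r) * partial_rr u t r)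
    = (n - 1) * (partial_r w t (u t r) * partial_r u t r) at euler
  linear_combination euler

end Hodograph

/-- Hodograph linearization of the radial nonlinear diffusion-reaction equation in `n`
dimensions with gradient diffusivity `g(|u_r|) = -κ/u_r²`. -/
theorem hodograph_radial (n : ℕ) (hn : 1 ≤ n) (κ : ℝ) (f : ℝ → ℝ)
    (u : ℝ → ℝ → ℝ) (hu : IsC2On u)
    (hur : ∀ t r : ℝ, 0 < r → partial_r u t r ≠ 0)
    (hpde : ∀ t r : ℝ, 0 < r →
      partial_t u t r
        = κ * (partial_rr u t r - (((n : ℝ) - 1) / r) * partial_r u t r)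
            / (partial_r u t r) ^ 2 + f (u t r))
    (w : ℝ → ℝ → ℝ) (hw : ContDiff ℝ 2 (Function.uncurry w))
    (hhod : ∀ t r : ℝ, 0 < r → w t (u t r) = r ^ n / (n : ℝ)) :
    ∀ t r : ℝ, 0 < r →
      partial_t w t (u t r)
        = κ * partial_rr w t (u t r) - f (u t r) * partial_r w t (u t r) := by
  obtain ⟨hut, hur', hurr, -⟩ := hu
  have hwd : Differentiable ℝ (uncurry w) := hw.differentiable two_ne_zero
  have hwz (t : ℝ) : Differentiable ℝ (w t) :=
    hwd.comp (differentiable_const t |>.prodMk differentiable_id)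
  intro t r hr
  have hdt := hodograph_dt (hwd _) (hut t r hr) (fun s => hhod s r hr)
  have hdr : ∀ᶠ s in 𝓝 r, partial_r w t (u t s) * partial_r u t s = s ^ (n - 1) := by
    filter_upwards [Ioi_mem_nhds hr] with s hs
    refine hodograph_dr (by omega) (hwz t _) (hur' t s hs) ?_
    filter_upwards [Ioi_mem_nhds hs] with y hy using hhod t y hy
  have hdrr := hodograph_drr hn (differentiable_partial_r_of_contDiff_two hw t _)
    (hurr t r hr) (hur' t r hr) hdr
  have hur0 : partial_r u t r ≠ 0 := hur t r hr
  rw [hpde t r hr] at hdt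
  field_simp at hdt
  refine mul_right_cancel₀ (mul_ne_zero hr.ne' (pow_ne_zero 2 hur0)) ?_
  linear_combination hdt - κ * hdrr
end
end

section
/- Let n be a natural number with n ≥ 1, let g : ℝ → ℝ be differentiable, and let b, k ∈ ℝ. Suppose u : ℝ → ℝ → ℝ is C² on ℝ × (0,∞), u_r(t,r) ≠ 0 for all t ∈ ℝ and r > 0, and u satisfies the radial generalized p-Laplacian diffusion–reaction equation u_t(t,r) = (g(|u_r(t,r)|) + |u_r(t,r)|·g'(|u_r(t,r)|))·u_rr(t,r) + ((n−1)/r)·g(|u_r(t,r)|)·u_r(t,r) + b + k·u(t,r) for all t ∈ ℝ and r > 0. Define T(t,r) = r^(n−1)·exp(−k·t)·u(t,r) and X(t,r) = −r^(n−1)·exp(−k·t)·(u_r(t,r)·g(|u_r(t,r)|) + (b/n)·r). Then ∂T/∂t(t,r) + ∂X/∂r(t,r) = 0 for all t ∈ ℝ and r > 0. -/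
noncomputable section

/-! Differentiating `T` in `t` gives `r^(n-1) e^(-kt) (u_t - k u)`, and differentiating `X` in
`r` by the product and chain rules gives minus the right-hand side of the equation times the same
factor: `(r^(n-1))' = ((n-1)/r) r^(n-1)` produces the drift term, and `b/n` contributes
`b (n-1)/n + b/n = b`. The flux involves `u_r ↦ u_r g(|u_r|)`, whose derivative is
`g(|x|) + |x| g'(|x|)` at every `x`, including `x = 0`. -/

open Real Filter Topology

theorem hasDerivAt_id_mul_comp_abs {g : ℝ → ℝ} {x : ℝ} (hg : DifferentiableAt ℝ g |x|) :
    HasDerivAt (fun y => y * g |y|) (g |x| + |x| * deriv g |x|) x := by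
  rcases eq_or_ne x 0 with rfl | hx
  · -- the slope `y * g |y| / y` is `g |y|`, which tends to `g 0` by continuity alone
    rw [hasDerivAt_iff_tendsto_slope_zero]
    have hcont : Tendsto (fun y : ℝ => g |y|) (𝓝[≠] 0) (𝓝 (g |0|)) :=
      ((hg.continuousAt.comp continuous_abs.continuousAt).tendsto).mono_left nhdsWithin_le_nhds
    refine (hcont.congr' ?_).trans (by simp)
    filter_upwards [self_mem_nhdsWithin] with y hy
    simp [inv_mul_cancel_left₀ hy]
  · refine ((hasDerivAt_id' x).fun_mul (hg.hasDerivAt.comp x (hasDerivAt_abs hx))).congr_deriv ?_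
    simp only [Function.comp, one_mul, ← self_mul_sign x]
    ring

theorem hasDerivAt_pow_pred {n : ℕ} (hn : 1 ≤ n) {r : ℝ} (hr : r ≠ 0) :
    HasDerivAt (fun s : ℝ => s ^ (n - 1)) (((n : ℝ) - 1) / r * r ^ (n - 1)) r := by
  refine (hasDerivAt_pow (n - 1) r).congr_deriv ?_
  obtain ⟨m, rfl⟩ : ∃ m, n = m + 1 := ⟨n - 1, by omega⟩
  rcases m with _ | m
  · simp
  · simp only [Nat.add_sub_cancel, Nat.cast_add, Nat.cast_one, pow_succ]
    field_simp
    ring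

theorem partial_t_weight_mul_exp {u : ℝ → ℝ → ℝ} {t r : ℝ} (w : ℝ → ℝ) (k : ℝ)
    (hu : DifferentiableAt ℝ (fun s => u s r) t) :
    partial_t (fun t r => w r * exp (-k * t) * u t r) t r
      = w r * exp (-k * t) * (partial_t u t r - k * u t r) := by
  have hexp : HasDerivAt (fun s => exp (-k * s)) (exp (-k * t) * -k) t := by
    simpa using ((hasDerivAt_id t).const_mul (-k)).exp
  have h := (hexp.const_mul (w r)).fun_mul hu.hasDerivAt
  rw [partial_t, h.deriv, partial_t]
  ring

theorem partial_r_weight_mul_flux {u : ℝ → ℝ → ℝ} {g w : ℝ → ℝ} {t r w' : ℝ} (k c : ℝ)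
    (hw : HasDerivAt w w' r) (hg : DifferentiableAt ℝ g |partial_r u t r|)
    (hu : DifferentiableAt ℝ (deriv fun s => u t s) r) :
    partial_r (fun t r => -(w r * exp (-k * t)
        * (partial_r u t r * g |partial_r u t r| + c * r))) t r
      = -(exp (-k * t) * (w' * (partial_r u t r * g |partial_r u t r| + c * r)
          + w r * ((g |partial_r u t r| + |partial_r u t r| * deriv g |partial_r u t r|)
              * partial_rr u t r + c))) := by
  have hG := (hasDerivAt_id_mul_comp_abs hg).comp r hu.hasDerivAt
  have h := ((hw.mul_const (exp (-k * t))).fun_mul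
    (hG.fun_add ((hasDerivAt_id' r).const_mul c))).fun_neg
  refine h.deriv.trans ?_
  simp only [Function.comp, partial_rr, mul_one]
  ring

theorem radial_conservation_law_mass_general (n : ℕ) (hn : 1 ≤ n)
    (g : ℝ → ℝ) (hg : Differentiable ℝ g) (b k : ℝ)
    (u : ℝ → ℝ → ℝ) (hu : IsC2On u)
    (hpde : ∀ t r : ℝ, 0 < r →
      partial_t u t r
        = (g |partial_r u t r| + |partial_r u t r| * deriv g |partial_r u t r|)
            * partial_rr u t r
          + (((n : ℝ) - 1) / r) * g |partial_r u t r| * partial_r u t r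
          + b + k * u t r)
    (T X : ℝ → ℝ → ℝ)
    (hT : ∀ t r : ℝ, T t r = r ^ (n - 1) * Real.exp (-k * t) * u t r)
    (hX : ∀ t r : ℝ, X t r
      = -(r ^ (n - 1) * Real.exp (-k * t)
          * (partial_r u t r * g |partial_r u t r| + (b / (n : ℝ)) * r))) :
    ∀ t r : ℝ, 0 < r → partial_t T t r + partial_r X t r = 0 := by
  intro t r hr
  obtain ⟨hu_t, -, hu_rr, -⟩ := hu
  obtain rfl : T = _ := funext fun t => funext (hT t)
  obtain rfl : X = _ := funext fun t => funext (hX t)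
  rw [partial_t_weight_mul_exp _ k (hu_t t r hr),
    partial_r_weight_mul_flux k _ (hasDerivAt_pow_pred hn hr.ne') (hg _) (hu_rr t r hr),
    hpde t r hr]
  have hn0 : (n : ℝ) ≠ 0 := by positivity
  field_simp
  ring

/-- Mass conservation law of the radial generalized p-Laplacian diffusion-reaction
equation with source `f(u) = b + k·u`. -/
theorem radial_conservation_law_mass (n : ℕ) (hn : 1 ≤ n)
    (g : ℝ → ℝ) (hg : Differentiable ℝ g) (b k : ℝ)
    (u : ℝ → ℝ → ℝ) (hu : IsC2On u)
    (hur : ∀ t r : ℝ, 0 < r → partial_r u t r ≠ 0)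
    (hpde : ∀ t r : ℝ, 0 < r →
      partial_t u t r
        = (g |partial_r u t r| + |partial_r u t r| * deriv g |partial_r u t r|)
            * partial_rr u t r
          + (((n : ℝ) - 1) / r) * g |partial_r u t r| * partial_r u t r
          + b + k * u t r)
    (T X : ℝ → ℝ → ℝ)
    (hT : ∀ t r : ℝ, T t r = r ^ (n - 1) * Real.exp (-k * t) * u t r)
    (hX : ∀ t r : ℝ, X t r
      = -(r ^ (n - 1) * Real.exp (-k * t)
          * (partial_r u t r * g |partial_r u t r| + (b / (n : ℝ)) * r))) :
    ∀ t r : ℝ, 0 < r → partial_t T t r + partial_r X t r = 0 :=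
  radial_conservation_law_mass_general n hn g hg b k u hu hpde T X hT hX
end
end

section
/- Let h : ℝ → ℝ be differentiable and let a, k, m, ε ∈ ℝ. Suppose u : ℝ → ℝ → ℝ is C² on ℝ × (0,∞), a + u(t,r) ≠ 0 for all t ∈ ℝ and r > 0, and u satisfies u_t(t,r) = h'(u_r(t,r))·u_rr(t,r) + (m/r)·h(u_r(t,r)) + k/(a + u(t,r)) for all t ∈ ℝ and r > 0. Define v(t,r) = exp(ε)·(a + u(exp(−2ε)·t, exp(−ε)·r)) − a. Then a + v(t,r) ≠ 0 and v satisfies the same equation, v_t(t,r) = h'(v_r(t,r))·v_rr(t,r) + (m/r)·h(v_r(t,r)) + k/(a + v(t,r)), for all t ∈ ℝ and r > 0. -/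
/-!
For `a + v(t, r) = d⁻¹ (a + u(d² t, d r))` the slope `v_r` equals `u_r` at the image point, and
each of the four terms `v_t`, `h'(v_r) v_rr`, `(m / r) h(v_r)`, `k / (a + v)` is `d` times the
corresponding term of the equation for `u` there. The chain rule
`deriv (f (c * ·)) x = c • deriv f (c * x)` holds for every `f`, differentiable or not.
-/

noncomputable section

def rescale (A c d B : ℝ) (u : ℝ → ℝ → ℝ) (t r : ℝ) : ℝ := A * u (c * t) (d * r) + B

def SolvesDiffusionReaction (h : ℝ → ℝ) (a k m : ℝ) (u : ℝ → ℝ → ℝ) : Prop :=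
  ∀ t r : ℝ, 0 < r →
    partial_t u t r = deriv h (partial_r u t r) * partial_rr u t r
      + (m / r) * h (partial_r u t r) + k / (a + u t r)

lemma deriv_const_mul_comp_mul_left (f : ℝ → ℝ) (A c x : ℝ) :
    deriv (fun s => A * f (c * s)) x = A * c * deriv f (c * x) := by
  rw [deriv_const_mul_field, deriv_comp_mul_left, smul_eq_mul, mul_assoc]

lemma deriv_deriv_const_mul_comp_mul_left (f : ℝ → ℝ) (A c x : ℝ) :
    deriv (deriv fun s => A * f (c * s)) x = A * c ^ 2 * deriv (deriv f) (c * x) := by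
  rw [funext (deriv_const_mul_comp_mul_left f A c), deriv_const_mul_comp_mul_left]
  ring

section rescale

variable (a A c d B : ℝ) (u : ℝ → ℝ → ℝ) (t r : ℝ)

lemma partial_t_rescale :
    partial_t (rescale A c d B u) t r = A * c * partial_t u (c * t) (d * r) := by
  simp only [partial_t, rescale, deriv_add_const]
  exact deriv_const_mul_comp_mul_left (fun s => u s (d * r)) A c t

lemma partial_r_rescale :
    partial_r (rescale A c d B u) t r = A * d * partial_r u (c * t) (d * r) := by
  simp only [partial_r, rescale, deriv_add_const]
  exact deriv_const_mul_comp_mul_left (u (c * t)) A d r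

lemma partial_rr_rescale :
    partial_rr (rescale A c d B u) t r = A * d ^ 2 * partial_rr u (c * t) (d * r) := by
  simp only [partial_rr, rescale, deriv_add_const']
  exact deriv_deriv_const_mul_comp_mul_left (u (c * t)) A d r

lemma add_rescale : a + rescale A c d (A * a - a) u t r = A * (a + u (c * t) (d * r)) := by
  rw [rescale]
  ring

end rescale

theorem SolvesDiffusionReaction.scaling {h : ℝ → ℝ} {a k m : ℝ} {u : ℝ → ℝ → ℝ}
    (hpde : SolvesDiffusionReaction h a k m u) {c d : ℝ} (hd : 0 < d) (hcd : c * d = 1) :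
    SolvesDiffusionReaction h a k m (rescale c (d ^ 2) d (c * a - a) u) := by
  intro t r hr
  have hc : c = d⁻¹ := eq_inv_of_mul_eq_one_left hcd
  have hu := hpde (d ^ 2 * t) (d * r) (mul_pos hd hr)
  rw [partial_t_rescale, partial_r_rescale, partial_rr_rescale, add_rescale, hu, hc]
  field_simp

theorem symmetry_X4_general (h : ℝ → ℝ) (a k m ε : ℝ)
    (u : ℝ → ℝ → ℝ)
    (hau : ∀ t r : ℝ, 0 < r → a + u t r ≠ 0)
    (hpde : ∀ t r : ℝ, 0 < r →
      partial_t u t r = deriv h (partial_r u t r) * partial_rr u t r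
        + (m / r) * h (partial_r u t r) + k / (a + u t r))
    (v : ℝ → ℝ → ℝ)
    (hv : ∀ t r : ℝ,
      v t r = Real.exp ε * (a + u (Real.exp (-2 * ε) * t) (Real.exp (-ε) * r)) - a) :
    ∀ t r : ℝ, 0 < r →
      a + v t r ≠ 0 ∧
      partial_t v t r = deriv h (partial_r v t r) * partial_rr v t r
        + (m / r) * h (partial_r v t r) + k / (a + v t r) := by
  have hexp : Real.exp ε * Real.exp (-ε) = 1 := by
    rw [← Real.exp_add, add_neg_cancel, Real.exp_zero]
  have hv' :
      v = rescale (Real.exp ε) (Real.exp (-ε) ^ 2) (Real.exp (-ε)) (Real.exp ε * a - a) u := by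
    ext t r
    rw [hv, rescale, ← Real.exp_nat_mul]
    ring_nf
  subst hv'
  intro t r hr
  refine ⟨?_, SolvesDiffusionReaction.scaling hpde (Real.exp_pos _) hexp t r hr⟩
  rw [add_rescale]
  exact mul_ne_zero (Real.exp_pos _).ne' (hau _ _ (mul_pos (Real.exp_pos _) hr))

/-- The scaling-and-shift point symmetry X₄ of the 1-dimensional nonlinear
diffusion-reaction equation with source `f(u) = k/(a+u)`. -/
theorem symmetry_X4 (h : ℝ → ℝ) (hh : Differentiable ℝ h) (a k m ε : ℝ)
    (u : ℝ → ℝ → ℝ) (hu : IsC2On u)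
    (hau : ∀ t r : ℝ, 0 < r → a + u t r ≠ 0)
    (hpde : ∀ t r : ℝ, 0 < r →
      partial_t u t r = deriv h (partial_r u t r) * partial_rr u t r
        + (m / r) * h (partial_r u t r) + k / (a + u t r))
    (v : ℝ → ℝ → ℝ)
    (hv : ∀ t r : ℝ,
      v t r = Real.exp ε * (a + u (Real.exp (-2 * ε) * t) (Real.exp (-ε) * r)) - a) :
    ∀ t r : ℝ, 0 < r →
      a + v t r ≠ 0 ∧
      partial_t v t r = deriv h (partial_r v t r) * partial_rr v t r
        + (m / r) * h (partial_r v t r) + k / (a + v t r) :=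
  symmetry_X4_general h a k m ε u hau hpde v hv
end
end

section
/- Let κ, a, k, m, ε ∈ ℝ. Suppose u : ℝ → ℝ → ℝ is C² on ℝ × (0,∞) and satisfies u_t(t,r) = −κ·(2·u_r(t,r)·u_rr(t,r) + (m/r)·u_r(t,r)²) + k·(a + u(t,r))² for all t ∈ ℝ and r > 0. For t ∈ ℝ with 1 − k·ε·t > 0, define v(t,r) = (1 − k·ε·t)⁻¹·((1 − k·ε·t)⁻¹·(a + u(t/(1 − k·ε·t), r)) + ε) − a. Then v satisfies the same equation, v_t(t,r) = −κ·(2·v_r(t,r)·v_rr(t,r) + (m/r)·v_r(t,r)²) + k·(a + v(t,r))², at every (t,r) with 1 − k·ε·t > 0 and r > 0. -/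
noncomputable section

/-- The projective dilation-and-shift point symmetry X₁₀ of the 1-dimensional nonlinear
diffusion-reaction equation with diffusivity `h(v) = -κ·v²` and source `k·(a+u)²`. -/
theorem symmetry_X10 (κ a k m ε : ℝ)
    (u : ℝ → ℝ → ℝ) (hu : IsC2On u)
    (hpde : ∀ t r : ℝ, 0 < r →
      partial_t u t r
        = -κ * (2 * partial_r u t r * partial_rr u t r + (m / r) * partial_r u t r ^ 2)
          + k * (a + u t r) ^ 2)
    (v : ℝ → ℝ → ℝ)
    (hv : ∀ t r : ℝ, 0 < 1 - k * ε * t →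
      v t r = (1 - k * ε * t)⁻¹
        * ((1 - k * ε * t)⁻¹ * (a + u (t / (1 - k * ε * t)) r) + ε) - a) :
    ∀ t r : ℝ, 0 < 1 - k * ε * t → 0 < r →
      partial_t v t r
        = -κ * (2 * partial_r v t r * partial_rr v t r + (m / r) * partial_r v t r ^ 2)
          + k * (a + v t r) ^ 2 := by
  intro t r ht hr
  obtain ⟨hut, hur, hurr, hutr, -⟩ := hu
  set c : ℝ := 1 - k * ε * t with hc_def
  have hc : c ≠ 0 := ne_of_gt ht
  set τ : ℝ := t / c with hτ_def
  -- spatial derivatives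
  have hfun : (fun s => v t s)
      = fun s => (c⁻¹ * c⁻¹) * u τ s + (c⁻¹ * c⁻¹ * a + c⁻¹ * ε - a) := by
    funext s
    rw [hv t s ht]; ring
  have hderiv1 : deriv (fun s => v t s) = fun x => (c⁻¹ * c⁻¹) * deriv (fun s => u τ s) x := by
    rw [hfun]
    funext x
    rw [deriv_add_const, deriv_const_mul_field]
  have hvr : partial_r v t r = (c⁻¹ * c⁻¹) * partial_r u τ r := by
    unfold partial_r
    rw [hderiv1]
  have hvrr : partial_rr v t r = (c⁻¹ * c⁻¹) * partial_rr u τ r := by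
    unfold partial_rr
    rw [hderiv1, deriv_const_mul_field]
  -- time derivative
  have hg : HasDerivAt (fun s : ℝ => 1 - k * ε * s) (-(k * ε)) t := by
    simpa using ((hasDerivAt_id t).const_mul (k * ε)).const_sub 1
  have hginv : HasDerivAt (fun s : ℝ => (1 - k * ε * s)⁻¹) (-(-(k * ε)) / c ^ 2) t :=
    hg.inv hc
  have hq : HasDerivAt (fun s : ℝ => s / (1 - k * ε * s))
      ((1 * c - t * -(k * ε)) / c ^ 2) t :=
    (hasDerivAt_id t).div hg hc
  have hUt : HasDerivAt (fun s => u s r) (partial_t u τ r) τ :=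
    (hut τ r hr).hasDerivAt
  have hA : HasDerivAt (fun s : ℝ => a + u (s / (1 - k * ε * s)) r)
      (partial_t u τ r * ((1 * c - t * -(k * ε)) / c ^ 2)) t := by
    have := (hUt.comp t hq)
    exact this.const_add a
  have hinner : HasDerivAt
      (fun s : ℝ => (1 - k * ε * s)⁻¹ * (a + u (s / (1 - k * ε * s)) r) + ε)
      ((-(-(k * ε)) / c ^ 2) * (a + u τ r)
        + c⁻¹ * (partial_t u τ r * ((1 * c - t * -(k * ε)) / c ^ 2))) t := by
    exact (hginv.mul hA).add_const ε
  have hw : HasDerivAt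
      (fun s : ℝ => (1 - k * ε * s)⁻¹
        * ((1 - k * ε * s)⁻¹ * (a + u (s / (1 - k * ε * s)) r) + ε) - a)
      ((-(-(k * ε)) / c ^ 2) * (c⁻¹ * (a + u τ r) + ε)
        + c⁻¹ * ((-(-(k * ε)) / c ^ 2) * (a + u τ r)
          + c⁻¹ * (partial_t u τ r * ((1 * c - t * -(k * ε)) / c ^ 2)))) t := by
    exact (hginv.mul hinner).sub_const a
  have heq : (fun s => v s r) =ᶠ[nhds t]
      (fun s : ℝ => (1 - k * ε * s)⁻¹
        * ((1 - k * ε * s)⁻¹ * (a + u (s / (1 - k * ε * s)) r) + ε) - a) := by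
    have hcont : ContinuousAt (fun s : ℝ => 1 - k * ε * s) t := by fun_prop
    have : ∀ᶠ s in nhds t, 0 < 1 - k * ε * s :=
      hcont.eventually (eventually_gt_nhds ht)
    filter_upwards [this] with s hs
    exact hv s r hs
  have hvt : partial_t v t r
      = (-(-(k * ε)) / c ^ 2) * (c⁻¹ * (a + u τ r) + ε)
        + c⁻¹ * ((-(-(k * ε)) / c ^ 2) * (a + u τ r)
          + c⁻¹ * (partial_t u τ r * ((1 * c - t * -(k * ε)) / c ^ 2))) := by
    unfold partial_t
    rw [heq.deriv_eq, hw.deriv]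
    rfl
  have hvval : v t r = c⁻¹ * (c⁻¹ * (a + u τ r) + ε) - a := hv t r ht
  have hUpde := hpde τ r hr
  rw [hvt, hvr, hvrr, hvval, hUpde]
  have hr' : r ≠ 0 := ne_of_gt hr
  field_simp
  ring
end
end

section
/- Let κ, b, m, ε, p ∈ ℝ with p ≠ 0. Suppose u : ℝ → ℝ → ℝ is C² on ℝ × (0,∞) and satisfies u_t(t,r) = κ·p·exp(p·u_r(t,r))·u_rr(t,r) + (m/r)·κ·exp(p·u_r(t,r)) + b for all t ∈ ℝ and r > 0. Define v(t,r) = b·exp(−p·ε)·(exp(p·ε) − 1)·t − ε·r + u(exp(−p·ε)·t, r). Then v satisfies the same equation, v_t(t,r) = κ·p·exp(p·v_r(t,r))·v_rr(t,r) + (m/r)·κ·exp(p·v_r(t,r)) + b, for all t ∈ ℝ and r > 0. -/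
noncomputable section

/-! The shift `v_r = u_r - ε` rescales the diffusivity `κ exp (p v_r)` by `exp (-p ε)`, which the
time dilation `t ↦ exp (-p ε) t` absorbs, since it rescales `v_t` by the same factor; the term
linear in `t` then restores the source `b`, because `exp (-p ε) b + b (1 - exp (-p ε)) = b`. -/

open Filter Topology

section ShiftDilate

variable (u : ℝ → ℝ → ℝ) {a c e t r : ℝ}

theorem partial_t_shift_dilate (hu : DifferentiableAt ℝ (fun s => u s r) (a * t)) :
    partial_t (fun t r => c * t + e * r + u (a * t) r) t r = c + partial_t u (a * t) r * a := by
  have hdil : HasDerivAt (fun s => u (a * s) r) (partial_t u (a * t) r * a) t :=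
    hu.hasDerivAt.comp t ((hasDerivAt_id t).const_mul a |>.congr_deriv (mul_one a))
  have hlin : HasDerivAt (fun s => c * s + e * r) c t :=
    ((hasDerivAt_id t).const_mul c).add_const (e * r) |>.congr_deriv (mul_one c)
  exact (hlin.add hdil).deriv

theorem deriv_shift_dilate_space (hu : DifferentiableAt ℝ (fun y => u (a * t) y) r) :
    deriv (fun y => c * t + e * y + u (a * t) y) r = e + partial_r u (a * t) r := by
  have hlin : HasDerivAt (fun y => c * t + e * y) e r :=
    ((hasDerivAt_id r).const_mul e).const_add (c * t) |>.congr_deriv (mul_one e)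
  exact (hlin.add hu.hasDerivAt).deriv

theorem partial_r_shift_dilate (hu : DifferentiableAt ℝ (fun y => u (a * t) y) r) :
    partial_r (fun t r => c * t + e * r + u (a * t) r) t r = e + partial_r u (a * t) r :=
  deriv_shift_dilate_space u hu

theorem partial_rr_shift_dilate (hu : ∀ᶠ y in 𝓝 r, DifferentiableAt ℝ (fun y => u (a * t) y) y) :
    partial_rr (fun t r => c * t + e * r + u (a * t) r) t r = partial_rr u (a * t) r := by
  have hr : deriv (fun y => c * t + e * y + u (a * t) y) =ᶠ[𝓝 r]
      fun y => e + deriv (fun y => u (a * t) y) y :=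
    hu.mono fun y hy => deriv_shift_dilate_space u hy
  exact hr.deriv_eq.trans (deriv_const_add e)

end ShiftDilate

theorem symmetry_X22_general (κ b m ε p : ℝ)
    (u : ℝ → ℝ → ℝ) (hu : IsC2On u)
    (hpde : ∀ t r : ℝ, 0 < r →
      partial_t u t r
        = κ * p * Real.exp (p * partial_r u t r) * partial_rr u t r
          + (m / r) * κ * Real.exp (p * partial_r u t r) + b)
    (v : ℝ → ℝ → ℝ)
    (hv : ∀ t r : ℝ,
      v t r = b * Real.exp (-p * ε) * (Real.exp (p * ε) - 1) * t - ε * r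
        + u (Real.exp (-p * ε) * t) r) :
    ∀ t r : ℝ, 0 < r →
      partial_t v t r
        = κ * p * Real.exp (p * partial_r v t r) * partial_rr v t r
          + (m / r) * κ * Real.exp (p * partial_r v t r) + b := by
  intro t r hr
  set a := Real.exp (-p * ε)
  have hv_eq : v = fun t r => b * a * (Real.exp (p * ε) - 1) * t + -ε * r + u (a * t) r := by
    funext t r; rw [hv, neg_mul, sub_eq_add_neg]
  have hdiff_r : ∀ᶠ y in 𝓝 r, DifferentiableAt ℝ (fun y => u (a * t) y) y :=
    (lt_mem_nhds hr).mono fun y hy => hu.2.1 _ y hy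
  rw [hv_eq, partial_t_shift_dilate u (hu.1 _ r hr), partial_r_shift_dilate u hdiff_r.self_of_nhds,
    partial_rr_shift_dilate u hdiff_r, hpde _ r hr]
  have hexp : Real.exp (p * (-ε + partial_r u (a * t) r))
      = a * Real.exp (p * partial_r u (a * t) r) := by
    rw [← Real.exp_add]; ring_nf
  have ha : a * Real.exp (p * ε) = 1 := by
    rw [← Real.exp_add, neg_mul, neg_add_cancel, Real.exp_zero]
  rw [hexp]
  linear_combination b * ha

/-- The dilation with time- and space-dependent shift point symmetry X₂₂ of the
1-dimensional nonlinear diffusion-reaction equation with exponential diffusivity. -/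
theorem symmetry_X22 (κ b m ε p : ℝ) (hp : p ≠ 0)
    (u : ℝ → ℝ → ℝ) (hu : IsC2On u)
    (hpde : ∀ t r : ℝ, 0 < r →
      partial_t u t r
        = κ * p * Real.exp (p * partial_r u t r) * partial_rr u t r
          + (m / r) * κ * Real.exp (p * partial_r u t r) + b)
    (v : ℝ → ℝ → ℝ)
    (hv : ∀ t r : ℝ,
      v t r = b * Real.exp (-p * ε) * (Real.exp (p * ε) - 1) * t - ε * r
        + u (Real.exp (-p * ε) * t) r) :
    ∀ t r : ℝ, 0 < r →
      partial_t v t r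
        = κ * p * Real.exp (p * partial_r v t r) * partial_rr v t r
          + (m / r) * κ * Real.exp (p * partial_r v t r) + b :=
  symmetry_X22_general κ b m ε p u hu hpde v hv
end
end

section
/- Let κ, a, k, c, m, ε, p ∈ ℝ with c ≠ 0 and p ∉ {−1, 0, 1}. Suppose u : ℝ → ℝ → ℝ is C² on ℝ × (0,∞), u_r(t,r) > 0 and a + u(t,r) > 0 for all t ∈ ℝ and r > 0, and u satisfies u_t(t,r) = −κ·(p·u_r(t,r)^(p−1)·u_rr(t,r) + (m/r)·u_r(t,r)^p) + k·(a + u(t,r))^p + c·(a + u(t,r)) for all t ∈ ℝ and r > 0, where all powers are real powers (Real.rpow). For s ∈ ℝ with exp(c·(p−1)·s) − ε > 0, set τ(s) = (c·(p−1))⁻¹·Real.log(exp(c·(p−1)·s) − ε) and define v(s,r) = exp(c·(s − τ(s)))·(a + u(τ(s), r)) − a. Then v satisfies the same equation, v_t = −κ·(p·v_r^(p−1)·v_rr + (m/r)·v_r^p) + k·(a + v)^p + c·(a + v), at every (s,r) with exp(c·(p−1)·s) − ε > 0 and r > 0. -/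
noncomputable section

open Real Filter Topology

/-! `X₆` rescales `a + u` by `λ = exp (c (s - τ))` and reparametrises time by `τ`, which solves
`τ' = exp (c (p - 1) (s - τ)) = λ ^ (p - 1)`. The diffusion term and `k (a + u) ^ p` are
homogeneous of degree `p` in `(a + u, u_r, u_rr)`, so they pick up `λ ^ p = λ τ'`, exactly the
factor `τ'` produces in `v_t`; the remaining `λ c (1 - τ') (a + u)` from differentiating `λ`
combines with `λ τ' c (a + u)` into the linear source `c (a + v)`. -/

theorem Real.mul_rpow_of_pos_left {x : ℝ} (hx : 0 < x) (y z : ℝ) :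
    (x * y) ^ z = x ^ z * y ^ z := by
  rcases le_or_gt 0 y with hy | hy
  · exact mul_rpow hx.le hy
  · rw [rpow_def_of_neg (mul_neg_of_pos_of_neg hx hy), rpow_def_of_neg hy, rpow_def_of_pos hx,
      log_mul hx.ne' hy.ne, add_mul, exp_add, mul_assoc]

theorem powerLaw_terms_homogeneous {lam : ℝ} (hlam : 0 < lam) (κ k m p r X Y Z : ℝ) :
    -κ * (p * (lam * X) ^ (p - 1) * (lam * Z) + (m / r) * (lam * X) ^ p) + k * (lam * Y) ^ p
      = lam ^ p * (-κ * (p * X ^ (p - 1) * Z + (m / r) * X ^ p) + k * Y ^ p) := by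
  simp only [Real.mul_rpow_of_pos_left hlam, rpow_sub_one hlam.ne']
  field_simp

theorem hasDerivAt_inv_mul_log_exp_sub {b ε s : ℝ} (hb : b ≠ 0) (hs : 0 < exp (b * s) - ε) :
    HasDerivAt (fun x => b⁻¹ * log (exp (b * x) - ε))
      (exp (b * (s - b⁻¹ * log (exp (b * s) - ε)))) s := by
  refine ((((hasDerivAt_id s).const_mul b).exp.sub_const ε).log hs.ne').const_mul b⁻¹
    |>.congr_deriv ?_
  rw [mul_sub, mul_inv_cancel_left₀ hb, exp_sub, exp_log hs, id]
  field_simp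

theorem hasDerivAt_exp_mul_sub_mul_comp {τ f : ℝ → ℝ} {μ f' a c s : ℝ}
    (hτ : HasDerivAt τ μ s) (hf : HasDerivAt f f' (τ s)) :
    HasDerivAt (fun x => exp (c * (x - τ x)) * (a + f (τ x)) - a)
      (exp (c * (s - τ s)) * (c * (1 - μ) * (a + f (τ s)) + μ * f')) s := by
  refine ((((hasDerivAt_id s).sub hτ).const_mul c).exp.mul
    ((hf.comp s hτ).const_add a)).sub_const a |>.congr_deriv ?_
  simp only [Pi.sub_apply, id, Function.comp_apply]
  ring

theorem deriv_const_mul_const_add_sub (lam a : ℝ) (f : ℝ → ℝ) :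
    deriv (fun y => lam * (a + f y) - a) = fun y => lam * deriv f y := by
  funext y
  rw [deriv_sub_const, deriv_const_mul_field, deriv_const_add]

section SpatialRescaling

variable {u v : ℝ → ℝ → ℝ} {s t lam a : ℝ}

theorem partial_r_of_eq_const_mul (h : ∀ y, v s y = lam * (a + u t y) - a) (r : ℝ) :
    partial_r v s r = lam * partial_r u t r := by
  simp only [partial_r, funext h, deriv_const_mul_const_add_sub]

theorem partial_rr_of_eq_const_mul (h : ∀ y, v s y = lam * (a + u t y) - a) (r : ℝ) :
    partial_rr v s r = lam * partial_rr u t r := by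
  simp only [partial_rr, funext h, deriv_const_mul_const_add_sub, deriv_const_mul_field]

end SpatialRescaling

theorem symmetry_X6_general (κ a k c m ε p : ℝ) (hc : c ≠ 0)
    (hp : p ≠ -1 ∧ p ≠ 0 ∧ p ≠ 1)
    (u : ℝ → ℝ → ℝ) (hu : IsC2On u)
    (hpde : ∀ t r : ℝ, 0 < r →
      partial_t u t r
        = -κ * (p * partial_r u t r ^ (p - 1) * partial_rr u t r
            + (m / r) * partial_r u t r ^ p)
          + k * (a + u t r) ^ p + c * (a + u t r))
    (τ : ℝ → ℝ)
    (hτ : ∀ s : ℝ, 0 < Real.exp (c * (p - 1) * s) - ε →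
      τ s = (c * (p - 1))⁻¹ * Real.log (Real.exp (c * (p - 1) * s) - ε))
    (v : ℝ → ℝ → ℝ)
    (hv : ∀ s r : ℝ, 0 < Real.exp (c * (p - 1) * s) - ε →
      v s r = Real.exp (c * (s - τ s)) * (a + u (τ s) r) - a) :
    ∀ s r : ℝ, 0 < Real.exp (c * (p - 1) * s) - ε → 0 < r →
      partial_t v s r
        = -κ * (p * partial_r v s r ^ (p - 1) * partial_rr v s r
            + (m / r) * partial_r v s r ^ p)
          + k * (a + v s r) ^ p + c * (a + v s r) := by
  intro s r hs hr
  set b := c * (p - 1)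
  have hb : b ≠ 0 := mul_ne_zero hc (sub_ne_zero.mpr hp.2.2)
  have hnear : ∀ᶠ x in 𝓝 s, 0 < exp (b * x) - ε :=
    (isOpen_lt continuous_const (by fun_prop)).mem_nhds hs
  have hτ' : HasDerivAt τ (exp (b * (s - τ s))) s := by
    rw [hτ s hs]
    exact (hasDerivAt_inv_mul_log_exp_sub hb hs).congr_of_eventuallyEq (hnear.mono hτ)
  have hut : HasDerivAt (fun t => u t r) (partial_t u (τ s) r) (τ s) :=
    (hu.1 (τ s) r hr).hasDerivAt
  have hvt := (hasDerivAt_exp_mul_sub_mul_comp (a := a) (c := c) hτ' hut).congr_of_eventuallyEq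
    (hnear.mono fun x hx => hv x r hx)
  set lam := exp (c * (s - τ s))
  have hlam : lam ^ p = lam * exp (b * (s - τ s)) := by
    rw [← exp_mul, ← exp_add]
    congr 1
    ring
  have hvs : ∀ y, v s y = lam * (a + u (τ s) y) - a := fun y => hv s y hs
  rw [partial_t, hvt.deriv, partial_r_of_eq_const_mul hvs, partial_rr_of_eq_const_mul hvs, hvs r,
    add_sub_cancel, powerLaw_terms_homogeneous (exp_pos (c * (s - τ s))), hpde (τ s) r hr, hlam]
  ring

/-- The exponential dilation-and-shift point symmetry X₆ of the 1-dimensional nonlinear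
diffusion-reaction equation with power-law diffusivity and source
`f(u) = k·(a+u)^p + c·(a+u)`. -/
theorem symmetry_X6 (κ a k c m ε p : ℝ) (hc : c ≠ 0)
    (hp : p ≠ -1 ∧ p ≠ 0 ∧ p ≠ 1)
    (u : ℝ → ℝ → ℝ) (hu : IsC2On u)
    (hur : ∀ t r : ℝ, 0 < r → 0 < partial_r u t r)
    (hau : ∀ t r : ℝ, 0 < r → 0 < a + u t r)
    (hpde : ∀ t r : ℝ, 0 < r →
      partial_t u t r
        = -κ * (p * partial_r u t r ^ (p - 1) * partial_rr u t r
            + (m / r) * partial_r u t r ^ p)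
          + k * (a + u t r) ^ p + c * (a + u t r))
    (τ : ℝ → ℝ)
    (hτ : ∀ s : ℝ, 0 < Real.exp (c * (p - 1) * s) - ε →
      τ s = (c * (p - 1))⁻¹ * Real.log (Real.exp (c * (p - 1) * s) - ε))
    (v : ℝ → ℝ → ℝ)
    (hv : ∀ s r : ℝ, 0 < Real.exp (c * (p - 1) * s) - ε →
      v s r = Real.exp (c * (s - τ s)) * (a + u (τ s) r) - a) :
    ∀ s r : ℝ, 0 < Real.exp (c * (p - 1) * s) - ε → 0 < r →
      partial_t v s r
        = -κ * (p * partial_r v s r ^ (p - 1) * partial_rr v s r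
            + (m / r) * partial_r v s r ^ p)
          + k * (a + v s r) ^ p + c * (a + v s r) :=
  symmetry_X6_general κ a k c m ε p hc hp u hu hpde τ hτ v hv
end
end

section
/- Let h : ℝ → ℝ be differentiable, let n, b, c₁ ∈ ℝ, and let U : ℝ → ℝ be twice differentiable on (0,∞) such that h(U'(r)) = c₁·r^(1−n) for all r > 0, where r^(1−n) is the real power Real.rpow. Then the function u(t,r) = b·t + U(r) satisfies the radial generalized p-Laplacian diffusion–reaction equation with constant source, u_t(t,r) = h'(u_r(t,r))·u_rr(t,r) + ((n−1)/r)·h(u_r(t,r)) + b, for all t ∈ ℝ and r > 0. -/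
/-!
Along the ansatz `u = b t + U(r)` one has `u_t = b`, so the equation reduces to the ODE
`h'(U') U'' + ((n-1)/r) h(U') = 0`, i.e. `(r^(n-1) h(U'))' = 0`. Its first integral is
`h(U') = c₁ r^(1-n)`; differentiating this identity and using `r (r^p)' = p r^p` recovers the ODE.
-/

noncomputable section

theorem partial_t_separable_add (T U : ℝ → ℝ) (t r : ℝ) :
    partial_t (fun t r => T t + U r) t r = deriv T t :=
  deriv_add_const (U r)

theorem partial_r_separable_add (T U : ℝ → ℝ) (t r : ℝ) :
    partial_r (fun t r => T t + U r) t r = deriv U r :=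
  deriv_const_add (T t)

theorem partial_rr_separable_add (T U : ℝ → ℝ) (t r : ℝ) :
    partial_rr (fun t r => T t + U r) t r = deriv (deriv U) r := by
  simp only [partial_rr, deriv_const_add']

theorem mul_deriv_const_mul_rpow (c p : ℝ) {r : ℝ} (hr : 0 < r) :
    r * deriv (fun x => c * x ^ p) r = p * (c * r ^ p) := by
  rw [deriv_const_mul _ (Real.differentiableAt_rpow_const_of_ne p hr.ne'),
    Real.deriv_rpow_const, Real.rpow_sub_one hr.ne']
  field_simp

theorem reduced_ode_of_flux_eq_const_mul_rpow {h U : ℝ → ℝ} {n c : ℝ} {r : ℝ} (hr : 0 < r)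
    (hh : DifferentiableAt ℝ h (deriv U r)) (hU : DifferentiableAt ℝ (deriv U) r)
    (hUh : ∀ x, 0 < x → h (deriv U x) = c * x ^ (1 - n)) :
    deriv h (deriv U r) * deriv (deriv U) r + ((n - 1) / r) * h (deriv U r) = 0 := by
  have hflux : (fun x => h (deriv U x)) =ᶠ[nhds r] fun x => c * x ^ (1 - n) :=
    Filter.eventually_of_mem (Ioi_mem_nhds hr) hUh
  have hchain : deriv h (deriv U r) * deriv (deriv U) r = deriv (fun x => c * x ^ (1 - n)) r := by
    rw [← deriv_comp r hh hU, ← hflux.deriv_eq]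
    rfl
  have hpow := mul_deriv_const_mul_rpow c (1 - n) hr
  rw [hchain, hUh r hr]
  field_simp
  linarith

theorem group_invariant_solution_translation_general (h : ℝ → ℝ) (hh : Differentiable ℝ h)
    (n b c₁ : ℝ)
    (U : ℝ → ℝ)
    (hU2 : ∀ r : ℝ, 0 < r → DifferentiableAt ℝ (deriv U) r)
    (hUh : ∀ r : ℝ, 0 < r → h (deriv U r) = c₁ * r ^ (1 - n)) :
    ∀ t r : ℝ, 0 < r →
      partial_t (fun t r => b * t + U r) t r
        = deriv h (partial_r (fun t r => b * t + U r) t r)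
            * partial_rr (fun t r => b * t + U r) t r
          + ((n - 1) / r) * h (partial_r (fun t r => b * t + U r) t r) + b := by
  intro t r hr
  rw [partial_t_separable_add (fun t => b * t), partial_r_separable_add (fun t => b * t),
    partial_rr_separable_add (fun t => b * t)]
  have hflux := reduced_ode_of_flux_eq_const_mul_rpow hr hh.differentiableAt (hU2 r hr) hUh
  have hT : deriv (fun t => b * t) t = b := by simp
  linarith

/-- Group-invariant solutions `u(t,r) = b·t + U(r)` of the radial generalized
p-Laplacian diffusion-reaction equation with constant source, obtained by reduction
under the combined time-translation and shift symmetry. -/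
theorem group_invariant_solution_translation (h : ℝ → ℝ) (hh : Differentiable ℝ h)
    (n b c₁ : ℝ)
    (U : ℝ → ℝ)
    (hU1 : ∀ r : ℝ, 0 < r → DifferentiableAt ℝ U r)
    (hU2 : ∀ r : ℝ, 0 < r → DifferentiableAt ℝ (deriv U) r)
    (hUh : ∀ r : ℝ, 0 < r → h (deriv U r) = c₁ * r ^ (1 - n)) :
    ∀ t r : ℝ, 0 < r →
      partial_t (fun t r => b * t + U r) t r
        = deriv h (partial_r (fun t r => b * t + U r) t r)
            * partial_rr (fun t r => b * t + U r) t r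
          + ((n - 1) / r) * h (partial_r (fun t r => b * t + U r) t r) + b :=
  group_invariant_solution_translation_general h hh n b c₁ U hU2 hUh
end
end

section
/- Let κ, k, μ, b, c₁, c₂, n, p ∈ ℝ with κ ≠ 0, k ≠ 0, n ≠ 0, p ≠ 0 and p ≠ 1. Let V : ℝ → ℝ be twice differentiable on (0,∞) with V'(r) > 0 and (V'(r))^p = c₁·r^(1−n) − (μ/(n·κ))·r for all r > 0, where all powers are real powers (Real.rpow). Define u(t,r) = exp(k·t)·(c₂ + V(r)) + (μ/((p−1)·k))·exp(k·p·t) − b/k. Then u_r(t,r) > 0 for all t ∈ ℝ and r > 0, and u satisfies the radial p-Laplacian diffusion–reaction equation u_t(t,r) = −κ·(p·u_r(t,r)^(p−1)·u_rr(t,r) + ((n−1)/r)·u_r(t,r)^p) + k·u(t,r) + b for all t ∈ ℝ and r > 0. -/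
noncomputable section

/-!
Along `u = e^{kt} (c₂ + V r) + (μ / ((p - 1) k)) e^{kpt} - b / k` one has `u_r = e^{kt} V'` and
`u_rr = e^{kt} V''`, and the diffusion term `p u_r^{p-1} u_rr + ((n-1)/r) u_r^p` is homogeneous of
degree `p` in `u_r`, so it equals `e^{kpt}` times its value on `V'`. That value is
`r^{1-n} (r^{n-1} V'^p)'`, which the first integral `V'^p = c₁ r^{1-n} - (μ/(nκ)) r` makes the
constant `-μ/κ`. The resulting term `μ e^{kpt}` is exactly what the time derivative of the
`μ`-term adds to `k u + b`.
-/

open Filter Topology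

section SeparatedForm

variable {u : ℝ → ℝ → ℝ} {f g V : ℝ → ℝ}

lemma partial_r_of_separated (hu : ∀ t r, u t r = f t * V r + g t) (t r : ℝ) :
    partial_r u t r = f t * deriv V r := by
  simp only [partial_r, hu, deriv_add_const', deriv_const_mul_field']

lemma partial_rr_of_separated (hu : ∀ t r, u t r = f t * V r + g t) (t r : ℝ) :
    partial_rr u t r = f t * deriv (deriv V) r := by
  simp only [partial_rr, hu, deriv_add_const', deriv_const_mul_field']

lemma partial_t_of_separated (hu : ∀ t r, u t r = f t * V r + g t) {t f' g' : ℝ}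
    (hf : HasDerivAt f f' t) (hg : HasDerivAt g g' t) (r : ℝ) :
    partial_t u t r = f' * V r + g' := by
  simp only [partial_t, hu]
  exact ((hf.mul_const (V r)).add hg).deriv

end SeparatedForm

lemma radial_rpow_operator_mul {E W W' : ℝ} (hE : 0 < E) (hW : 0 ≤ W) (n p r : ℝ) :
    p * (E * W) ^ (p - 1) * (E * W') + ((n - 1) / r) * (E * W) ^ p
      = E ^ p * (p * W ^ (p - 1) * W' + ((n - 1) / r) * W ^ p) := by
  have hEp : E ^ (p - 1) * E = E ^ p := by
    rw [← Real.rpow_add_one hE.ne', sub_add_cancel]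
  rw [Real.mul_rpow hE.le hW, Real.mul_rpow hE.le hW, ← hEp]
  ring

lemma radial_rpow_operator_of_rpow_eq {W : ℝ → ℝ} {c a n p r : ℝ} (hr : 0 < r)
    (hW : DifferentiableAt ℝ W r) (hWpos : 0 < W r)
    (hfirst : (fun s => W s ^ p) =ᶠ[𝓝 r] fun s => c * s ^ (1 - n) - a * s) :
    p * W r ^ (p - 1) * deriv W r + ((n - 1) / r) * W r ^ p = -(n * a) := by
  have hlhs : HasDerivAt (fun s => W s ^ p) (deriv W r * p * W r ^ (p - 1)) r :=
    hW.hasDerivAt.rpow_const (Or.inl hWpos.ne')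
  have hrhs : HasDerivAt (fun s => c * s ^ (1 - n) - a * s)
      (c * ((1 - n) * r ^ (1 - n - 1)) - a * 1) r :=
    ((Real.hasDerivAt_rpow_const (Or.inl hr.ne')).const_mul c).sub ((hasDerivAt_id r).const_mul a)
  have hderiv : deriv W r * p * W r ^ (p - 1) = c * ((1 - n) * r ^ (1 - n - 1)) - a * 1 :=
    hlhs.deriv ▸ hrhs.deriv ▸ hfirst.deriv_eq
  have hpow : r ^ (1 - n) = r ^ (1 - n - 1) * r := by
    rw [← Real.rpow_add_one hr.ne', sub_add_cancel]
  rw [hfirst.eq_of_nhds, hpow]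
  field_simp
  linear_combination hderiv

theorem group_invariant_solution_dilation_general (κ k μ b c₁ c₂ n p : ℝ)
    (hκ : κ ≠ 0) (hk : k ≠ 0) (hn : n ≠ 0) (hp1 : p ≠ 1)
    (V : ℝ → ℝ)
    (hV2 : ∀ r : ℝ, 0 < r → DifferentiableAt ℝ (deriv V) r)
    (hVpos : ∀ r : ℝ, 0 < r → 0 < deriv V r)
    (hVeq : ∀ r : ℝ, 0 < r → deriv V r ^ p = c₁ * r ^ (1 - n) - (μ / (n * κ)) * r)
    (u : ℝ → ℝ → ℝ)
    (hu : ∀ t r : ℝ,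
      u t r = Real.exp (k * t) * (c₂ + V r)
        + (μ / ((p - 1) * k)) * Real.exp (k * p * t) - b / k) :
    ∀ t r : ℝ, 0 < r →
      0 < partial_r u t r ∧
      partial_t u t r
        = -κ * (p * partial_r u t r ^ (p - 1) * partial_rr u t r
            + ((n - 1) / r) * partial_r u t r ^ p)
          + k * u t r + b := by
  intro t r hr
  have hsep : ∀ t r, u t r = Real.exp (k * t) * (c₂ + V r)
      + ((μ / ((p - 1) * k)) * Real.exp (k * p * t) - b / k) := fun t r => by rw [hu]; ring
  have hur : partial_r u t r = Real.exp (k * t) * deriv V r := by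
    rw [partial_r_of_separated hsep, deriv_const_add']
  have hurr : partial_rr u t r = Real.exp (k * t) * deriv (deriv V) r := by
    rw [partial_rr_of_separated hsep, deriv_const_add']
  have hexp_kt : HasDerivAt (fun s => Real.exp (k * s)) (Real.exp (k * t) * k) t := by
    simpa using ((hasDerivAt_id t).const_mul k).exp
  have hexp_kpt :
      HasDerivAt (fun s => Real.exp (k * p * s)) (Real.exp (k * p * t) * (k * p)) t := by
    simpa using ((hasDerivAt_id t).const_mul (k * p)).exp
  have hut : partial_t u t r = Real.exp (k * t) * k * (c₂ + V r)
      + (μ / ((p - 1) * k)) * (Real.exp (k * p * t) * (k * p)) :=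
    partial_t_of_separated hsep hexp_kt ((hexp_kpt.const_mul _).sub_const _) r
  have hV'op : p * deriv V r ^ (p - 1) * deriv (deriv V) r + ((n - 1) / r) * deriv V r ^ p
      = -(μ / κ) := by
    rw [radial_rpow_operator_of_rpow_eq hr (hV2 r hr) (hVpos r hr)
      (eventually_of_mem (Ioi_mem_nhds hr) hVeq)]
    field_simp
  have hexp : Real.exp (k * t) ^ p = Real.exp (k * p * t) := by
    rw [← Real.exp_mul]; ring_nf
  refine ⟨hur ▸ mul_pos (Real.exp_pos _) (hVpos r hr), ?_⟩
  rw [hut, hurr, hur, hu, radial_rpow_operator_mul (Real.exp_pos _) (hVpos r hr).le, hV'op, hexp]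
  have hp1' : p - 1 ≠ 0 := sub_ne_zero.mpr hp1
  field_simp
  ring

/-- Group-invariant solutions of the radial p-Laplacian diffusion-reaction equation
with linear source, obtained by reduction under the combined time-dependent dilation
and shift symmetry `k·X₆ + μ·X₃`. -/
theorem group_invariant_solution_dilation (κ k μ b c₁ c₂ n p : ℝ)
    (hκ : κ ≠ 0) (hk : k ≠ 0) (hn : n ≠ 0) (hp0 : p ≠ 0) (hp1 : p ≠ 1)
    (V : ℝ → ℝ)
    (hV1 : ∀ r : ℝ, 0 < r → DifferentiableAt ℝ V r)
    (hV2 : ∀ r : ℝ, 0 < r → DifferentiableAt ℝ (deriv V) r)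
    (hVpos : ∀ r : ℝ, 0 < r → 0 < deriv V r)
    (hVeq : ∀ r : ℝ, 0 < r → deriv V r ^ p = c₁ * r ^ (1 - n) - (μ / (n * κ)) * r)
    (u : ℝ → ℝ → ℝ)
    (hu : ∀ t r : ℝ,
      u t r = Real.exp (k * t) * (c₂ + V r)
        + (μ / ((p - 1) * k)) * Real.exp (k * p * t) - b / k) :
    ∀ t r : ℝ, 0 < r →
      0 < partial_r u t r ∧
      partial_t u t r
        = -κ * (p * partial_r u t r ^ (p - 1) * partial_rr u t r
            + ((n - 1) / r) * partial_r u t r ^ p)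
          + k * u t r + b :=
  group_invariant_solution_dilation_general κ k μ b c₁ c₂ n p hκ hk hn hp1 V hV2 hVpos hVeq u hu
end
end
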